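/- arXiv:2309.15263 — 2 statements merged into one kernel-verified Lean document; each statement's English description precedes it below -/
import Mathlib

section
/- The linear map A(x,y) = (2x-3y, x-2y) maps the set Ω ∩ {(x,y) | y ≥ x} bijectively onto itself; in other words, the image of Ω ∩ {(x,y) | y ≥ x} under A equals Ω ∩ {(x,y) | y ≥ x}. -/
/-- The kite `Ω`: convex hull of the four points
`(-1/2,-1/2)`, `(-1/6,-1/2)`, `(1/2,1/2)`, `(-1/2,-1/6)` in `ℝ²`. -/
noncomputable def Omega : Set (ℝ × ℝ) :=
  convexHull ℝ {((-1/2 : ℝ), (-1/2 : ℝ)), ((-1/6 : ℝ), (-1/2 : ℝ)),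
    ((1/2 : ℝ), (1/2 : ℝ)), ((-1/2 : ℝ), (-1/6 : ℝ))}

/-- The linear involution `A(x,y) = (2x - 3y, x - 2y)`. -/
def Amap : ℝ × ℝ → ℝ × ℝ := fun p => (2 * p.1 - 3 * p.2, p.1 - 2 * p.2)

lemma Amap_invol (p : ℝ × ℝ) : Amap (Amap p) = p := by
  simp only [Amap]
  ext <;> dsimp <;> ring

lemma key {p : ℝ × ℝ} (hp : p ∈ Omega) (hxy : p.1 ≤ p.2) :
    Amap p ∈ Omega ∧ (Amap p).1 ≤ (Amap p).2 := by
  constructor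
  · unfold Omega at hp ⊢
    rw [convexHull_insert (by simp), mem_convexJoin] at hp
    obtain ⟨v1, hv1, q, hq, hpq⟩ := hp
    rw [Set.mem_singleton_iff] at hv1; subst hv1
    rw [convexHull_insert (by simp), mem_convexJoin] at hq
    obtain ⟨v2, hv2, r, hr, hqr⟩ := hq
    rw [Set.mem_singleton_iff] at hv2; subst hv2
    rw [convexHull_pair] at hr
    obtain ⟨t3, s3, ht3, hs3, hts3, rfl⟩ := hr
    obtain ⟨t2, s2, ht2, hs2, hts2, rfl⟩ := hqr
    obtain ⟨t1, s1, ht1, hs1, hts1, hP⟩ := hpq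
    set a := t1 with ha
    set b := s1 * t2 with hb
    set c := s1 * s2 * t3 with hc
    set d := s1 * s2 * s3 with hd
    have hb0 : 0 ≤ b := mul_nonneg hs1 ht2
    have hc0 : 0 ≤ c := mul_nonneg (mul_nonneg hs1 hs2) ht3
    have hd0 : 0 ≤ d := mul_nonneg (mul_nonneg hs1 hs2) hs3
    have hsum : a + b + c + d = 1 := by
      have : t1 + s1 * (t2 + s2 * (t3 + s3)) = 1 := by
        rw [hts3, mul_one, hts2, mul_one, hts1]
      nlinarith [this]
    have hx : p.1 = a * (-1/2) + b * (-1/6) + c * (1/2) + d * (-1/2) := by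
      rw [← hP]; simp [Prod.smul_def, smul_eq_mul]; ring
    have hy : p.2 = a * (-1/2) + b * (-1/2) + c * (1/2) + d * (-1/6) := by
      rw [← hP]; simp [Prod.smul_def, smul_eq_mul]; ring
    have hbd : b ≤ d := by rw [hx, hy] at hxy; linarith
    -- weights for A p on v1, v3, v4
    have hAeq : Amap p = (c + b/3) • ((-1/2 : ℝ), (-1/2 : ℝ))
        + (a + 5*b/3) • ((1/2 : ℝ), (1/2 : ℝ)) + (d - b) • ((-1/2 : ℝ), (-1/6 : ℝ)) := by
      simp only [Amap]
      ext <;> simp [Prod.smul_def, smul_eq_mul] <;> rw [hx, hy] <;> ring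
    rw [hAeq]
    have hconv := convex_convexHull ℝ
      ({((-1/2 : ℝ), (-1/2 : ℝ)), ((-1/6 : ℝ), (-1/2 : ℝ)),
        ((1/2 : ℝ), (1/2 : ℝ)), ((-1/2 : ℝ), (-1/6 : ℝ))} : Set (ℝ × ℝ))
    have h1 : ((-1/2 : ℝ), (-1/2 : ℝ)) ∈ convexHull ℝ
        ({((-1/2 : ℝ), (-1/2 : ℝ)), ((-1/6 : ℝ), (-1/2 : ℝ)),
        ((1/2 : ℝ), (1/2 : ℝ)), ((-1/2 : ℝ), (-1/6 : ℝ))} : Set (ℝ × ℝ)) :=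
      subset_convexHull ℝ _ (by simp)
    have h3 : ((1/2 : ℝ), (1/2 : ℝ)) ∈ convexHull ℝ
        ({((-1/2 : ℝ), (-1/2 : ℝ)), ((-1/6 : ℝ), (-1/2 : ℝ)),
        ((1/2 : ℝ), (1/2 : ℝ)), ((-1/2 : ℝ), (-1/6 : ℝ))} : Set (ℝ × ℝ)) :=
      subset_convexHull ℝ _ (by simp)
    have h4 : ((-1/2 : ℝ), (-1/6 : ℝ)) ∈ convexHull ℝ
        ({((-1/2 : ℝ), (-1/2 : ℝ)), ((-1/6 : ℝ), (-1/2 : ℝ)),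
        ((1/2 : ℝ), (1/2 : ℝ)), ((-1/2 : ℝ), (-1/6 : ℝ))} : Set (ℝ × ℝ)) :=
      subset_convexHull ℝ _ (by simp)
    -- use Convex.sum_mem with Fin 3
    have hmem := hconv.sum_mem (t := (Finset.univ : Finset (Fin 3)))
      (w := ![c + b/3, a + 5*b/3, d - b])
      (z := ![((-1/2 : ℝ), (-1/2 : ℝ)), ((1/2 : ℝ), (1/2 : ℝ)), ((-1/2 : ℝ), (-1/6 : ℝ))])
      (by intro i _; fin_cases i <;> simp <;> linarith)
      (by simp [Fin.sum_univ_three]; linarith)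
      (by intro i _; fin_cases i <;> exact subset_convexHull ℝ _ (by norm_num))
    simpa [Fin.sum_univ_three] using hmem
  · simp only [Amap]; linarith

theorem Amap_maps_upper_omega_onto_itself :
    Amap '' (Omega ∩ {p : ℝ × ℝ | p.2 ≥ p.1}) = Omega ∩ {p : ℝ × ℝ | p.2 ≥ p.1} := by
  ext q
  constructor
  · rintro ⟨p, ⟨hpΩ, hpxy⟩, rfl⟩
    obtain ⟨h1, h2⟩ := key hpΩ hpxy
    exact ⟨h1, h2⟩
  · rintro ⟨hqΩ, hqxy⟩
    obtain ⟨h1, h2⟩ := key hqΩ hqxy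
    exact ⟨Amap q, ⟨h1, h2⟩, Amap_invol q⟩
end

section
/- Let a, b, c be real numbers with a·c - b² = 1, and set ρ := a + 2b + c. Let J be the 2×2 real matrix with rows (1, -1) and (a+b, b+c), and let H be the 2×2 real matrix with rows (a, b) and (b, c). Then Jᵀ * J = ρ • H. -/
theorem isothermal_identity (a b c : ℝ) (hMA : a * c - b ^ 2 = 1) :
    Matrix.transpose !![(1 : ℝ), -1; a + b, b + c] * !![(1 : ℝ), -1; a + b, b + c]
      = (a + 2 * b + c) • !![a, b; b, c] := by
  have h : b ^ 2 = a * c - 1 := by linarith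
  ext i j
  fin_cases i <;> fin_cases j <;>
    simp [Matrix.mul_apply, Fin.sum_univ_succ, Matrix.transpose] <;> nlinarith [hMA]
end
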